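/- Let H be a thick spider with partition (S, K, R) such that the subgraph H[R] of H induced by R is P4-sparse, let u ∈ R, and let uw be a tail added to H (w ∉ V(H)). Let f' be the minimum number of fill edges (excluding uw) in a P4-sparse completion of the graph H[R]+uw. Then the minimum number of fill edges (excluding the tail uw) in a P4-sparse completion of H+uw equals |K| + f'. -/

import Mathlib

open SimpleGraph Set

variable {α : Type*}

/-- The graph `G + uw` obtained from `G` by adding the tail edge `uw`. -/
def addTail (G : SimpleGraph α) (u w : α) : SimpleGraph α :=
  G ⊔ SimpleGraph.fromEdgeSet {s(u, w)}

/-- The number of fill edges of a completion `G'` of the base graph `base`: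
the edges of `G'` that are not edges of `base`. -/
noncomputable def fillCount (base G' : SimpleGraph α) : ℕ :=
  (G'.edgeSet \ base.edgeSet).ncard

/-- `S` is an independent set of the graph `G`. -/
def IsIndepSetOn (G : SimpleGraph α) (S : Set α) : Prop :=
  ∀ x ∈ S, ∀ y ∈ S, ¬ G.Adj x y

/-- A graph is split if its vertex set can be partitioned into a clique and an
independent set. -/
def IsSplitGraph (G : SimpleGraph α) : Prop :=
  ∃ K S : Set α, K ∪ S = Set.univ ∧ Disjoint K S ∧ G.IsClique K ∧ IsIndepSetOn G S

/-- `a b c d` (in this order) induce a chordless path `P₄` in `G`. -/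
def IsInducedP4 (G : SimpleGraph α) (a b c d : α) : Prop :=
  a ≠ b ∧ a ≠ c ∧ a ≠ d ∧ b ≠ c ∧ b ≠ d ∧ c ≠ d ∧
  G.Adj a b ∧ G.Adj b c ∧ G.Adj c d ∧ ¬ G.Adj a c ∧ ¬ G.Adj a d ∧ ¬ G.Adj b d

/-- `a b c d` (in this order) induce a chordless cycle `C₄` in `G`. -/
def IsInducedC4 (G : SimpleGraph α) (a b c d : α) : Prop :=
  a ≠ b ∧ a ≠ c ∧ a ≠ d ∧ b ≠ c ∧ b ≠ d ∧ c ≠ d ∧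
  G.Adj a b ∧ G.Adj b c ∧ G.Adj c d ∧ G.Adj d a ∧ ¬ G.Adj a c ∧ ¬ G.Adj b d

/-- `a b c d` induce a `2K₂` (two independent edges `ab` and `cd`) in `G`. -/
def IsInduced2K2 (G : SimpleGraph α) (a b c d : α) : Prop :=
  a ≠ b ∧ a ≠ c ∧ a ≠ d ∧ b ≠ c ∧ b ≠ d ∧ c ≠ d ∧
  G.Adj a b ∧ G.Adj c d ∧ ¬ G.Adj a c ∧ ¬ G.Adj a d ∧ ¬ G.Adj b c ∧ ¬ G.Adj b d

/-- A graph is threshold iff it has no induced `C₄`, `P₄`, or `2K₂`. -/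
def IsThresholdGraph (G : SimpleGraph α) : Prop :=
  (∀ a b c d, ¬ IsInducedC4 G a b c d) ∧ (∀ a b c d, ¬ IsInducedP4 G a b c d) ∧
  (∀ a b c d, ¬ IsInduced2K2 G a b c d)

/-- A graph is quasi-threshold iff it has no induced `C₄` or `P₄`. -/
def IsQuasiThresholdGraph (G : SimpleGraph α) : Prop :=
  (∀ a b c d, ¬ IsInducedC4 G a b c d) ∧ (∀ a b c d, ¬ IsInducedP4 G a b c d)

/-- `t` is the vertex set of an induced `P₄` of `G`. -/
def IsP4SetOn (G : SimpleGraph α) (t : Set α) : Prop :=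
  ∃ a b c d : α, t = {a, b, c, d} ∧ IsInducedP4 G a b c d

/-- A graph is `P₄`-sparse iff every set of five vertices induces at most one `P₄`. -/
def IsP4Sparse (G : SimpleGraph α) : Prop :=
  ∀ s : Set α, s.ncard = 5 →
    ∀ t₁ ⊆ s, ∀ t₂ ⊆ s, IsP4SetOn G t₁ → IsP4SetOn G t₂ → t₁ = t₂

/-- The subgraph of `H` induced by the set `R` (as a graph on the same vertex type,
all vertices outside `R` being isolated). -/
def restrictSet (H : SimpleGraph α) (R : Set α) : SimpleGraph α where
  Adj x y := H.Adj x y ∧ x ∈ R ∧ y ∈ R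
  symm := by
    first
    | exact ⟨fun x y h => ⟨h.1.symm, h.2.2, h.2.1⟩⟩
    | exact fun x y h => ⟨h.1.symm, h.2.2, h.2.1⟩
  loopless := ⟨fun x h => H.loopless.irrefl x h.1⟩

/-- `(S, K, R)` is a thin-spider partition of (the vertex set of) `H`. -/
def ThinSpider (H : SimpleGraph α) (S K R : Set α) : Prop :=
  IsIndepSetOn H S ∧ H.IsClique K ∧ S.ncard = K.ncard ∧ 2 ≤ K.ncard ∧
  Disjoint S K ∧ Disjoint S R ∧ Disjoint K R ∧
  (∀ r ∈ R, ∀ k ∈ K, H.Adj r k) ∧ (∀ r ∈ R, ∀ s ∈ S, ¬ H.Adj r s) ∧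
  ∃ f : α → α, Set.BijOn f S K ∧ ∀ s ∈ S, ∀ k ∈ K, (H.Adj s k ↔ k = f s)

/-- `(S, K, R)` is a thick-spider partition of (the vertex set of) `H`;
thick spiders are assumed to have `|K| ≥ 3`. -/
def ThickSpider (H : SimpleGraph α) (S K R : Set α) : Prop :=
  IsIndepSetOn H S ∧ H.IsClique K ∧ S.ncard = K.ncard ∧ 3 ≤ K.ncard ∧
  Disjoint S K ∧ Disjoint S R ∧ Disjoint K R ∧
  (∀ r ∈ R, ∀ k ∈ K, H.Adj r k) ∧ (∀ r ∈ R, ∀ s ∈ S, ¬ H.Adj r s) ∧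
  ∃ f : α → α, Set.BijOn f S K ∧ ∀ s ∈ S, ∀ k ∈ K, (H.Adj s k ↔ k ≠ f s)

/-- The set of possible numbers of fill edges of completions of `base` into the
graph class `C`. -/
def completionFills (C : SimpleGraph α → Prop) (base : SimpleGraph α) : Set ℕ :=
  {n | ∃ G' : SimpleGraph α, base ≤ G' ∧ C G' ∧ fillCount base G' = n}

/-!
Call `S`, `K`, `R` the legs, body and head of the spider, write `Q = R ∪ {w}`, and split the
fill edges of a completion into those inside `Q` and the outer ones.

Upper bound: joining `w` to the whole body `K` of an optimal completion of `H[R]+uw` gives a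
thick spider with head `Q`, and a spider is `P₄`-sparse as soon as its head is (its other
`P₄`'s have the form leg–body–body–leg and are determined by either leg). The outer fill edges
are then exactly the `|K|` edges `wk`.

Lower bound: in a `P₄`-sparse completion `G'` the inner fill edges form a completion of
`H[R]+uw`, so there are at least `f'` of them. Call a leg untouched if it is adjacent to neither
`u` nor `w` in `G'`, and a body vertex untouched if it is not adjacent to `w`. For an untouched
body vertex `k` and an untouched leg `s` adjacent to `k`, `w u k s` is an induced `P₄`. Two
induced `P₄`'s sharing three vertices coincide, and in a thick spider every leg misses exactly
one body vertex and vice versa, so once both kinds exist there are at most two untouched legs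
and two untouched body vertices. Charging one outer fill edge to each touched vertex then gives
`|K|` outer fill edges, except when `|K| = 3` with one touched leg, one touched body vertex and
no fill edge among legs and body; there two `P₄`'s sharing three vertices are exhibited
directly.
-/

@[simp]
theorem restrictSet_adj {G : SimpleGraph α} {Q : Set α} {x y : α} :
    (restrictSet G Q).Adj x y ↔ G.Adj x y ∧ x ∈ Q ∧ y ∈ Q :=
  Iff.rfl

section InducedP4

variable {G : SimpleGraph α} {a b c d x y : α} {t t₁ t₂ U : Set α}

theorem IsInducedP4.reverse (h : IsInducedP4 G a b c d) : IsInducedP4 G d c b a := by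
  obtain ⟨hab, hac, had, hbc, hbd, hcd, eab, ebc, ecd, nac, nad, nbd⟩ := h
  exact ⟨hcd.symm, hbd.symm, had.symm, hbc.symm, hac.symm, hab.symm, ecd.symm, ebc.symm,
    eab.symm, fun h => nbd h.symm, fun h => nad h.symm, fun h => nac h.symm⟩

theorem IsInducedP4.isP4SetOn (h : IsInducedP4 G a b c d) : IsP4SetOn G {a, b, c, d} :=
  ⟨a, b, c, d, rfl, h⟩

theorem IsP4SetOn.ncard_eq (h : IsP4SetOn G t) : t.ncard = 4 := by
  obtain ⟨a, b, c, d, rfl, hab, hac, had, hbc, hbd, hcd, -⟩ := h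
  rw [ncard_insert_of_notMem (by simp [hab, hac, had]), ncard_insert_of_notMem (by simp [hbc, hbd]),
    ncard_pair hcd]

theorem IsP4SetOn.finite (h : IsP4SetOn G t) : t.Finite :=
  finite_of_ncard_ne_zero (by rw [h.ncard_eq]; norm_num)

theorem IsP4SetOn.eq_of_mem_sdiff (ht : IsP4SetOn G t) (hU : U.ncard = 5) (htU : t ⊆ U)
    (hx : x ∈ U \ t) (hy : y ∈ U \ t) : x = y := by
  by_contra hxy
  have hUf : U.Finite := finite_of_ncard_ne_zero (by omega)
  have := ncard_le_ncard (insert_subset hx.1 (insert_subset hy.1 htU)) hUf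
  rw [ncard_insert_of_notMem (by simp [hxy, hx.2]) ((hUf.subset htU).insert y),
    ncard_insert_of_notMem hy.2 (hUf.subset htU), ht.ncard_eq] at this
  omega

theorem IsP4Sparse.eq_of_ncard_union_le (hG : IsP4Sparse G) (h₁ : IsP4SetOn G t₁)
    (h₂ : IsP4SetOn G t₂) (h : (t₁ ∪ t₂).ncard ≤ 5) : t₁ = t₂ := by
  by_contra hne
  have hsub : t₁ ⊂ t₁ ∪ t₂ := by
    refine ssubset_of_subset_of_ne subset_union_left fun heq => hne ?_
    have h₂₁ : t₂ ⊆ t₁ := heq ▸ subset_union_right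
    exact (eq_of_subset_of_ncard_le h₂₁ (by rw [h₁.ncard_eq, h₂.ncard_eq]) h₁.finite).symm
  have hlt := ncard_lt_ncard hsub (h₁.finite.union h₂.finite)
  rw [h₁.ncard_eq] at hlt
  exact hne (hG _ (by omega) t₁ subset_union_left t₂ subset_union_right h₁ h₂)

theorem IsP4Sparse.eq_of_isP4SetOn_insert (hG : IsP4Sparse G) (hx : x ∉ t)
    (h₁ : IsP4SetOn G (insert x t)) (h₂ : IsP4SetOn G (insert y t)) : x = y := by
  have ht : t.ncard = 3 := by
    have := h₁.ncard_eq
    rw [ncard_insert_of_notMem hx (h₁.finite.subset (subset_insert x t))] at this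
    omega
  have hunion : (insert x t ∪ insert y t).ncard ≤ 5 := by
    rw [insert_union, union_insert, union_self]
    exact (ncard_insert_le _ _).trans (by linarith [ncard_insert_le y t])
  have hxy : x ∈ insert y t := hG.eq_of_ncard_union_le h₁ h₂ hunion ▸ mem_insert x t
  exact (mem_insert_iff.mp hxy).resolve_right hx

theorem IsP4Sparse.eq_of_isInducedP4_last (hG : IsP4Sparse G) (h₁ : IsInducedP4 G a b c x)
    (h₂ : IsInducedP4 G a b c y) : x = y := by
  refine hG.eq_of_isP4SetOn_insert (t := {a, b, c}) ?_ ?_ ?_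
  · obtain ⟨-, -, hax, -, hbx, hcx, -⟩ := h₁
    simp [hax.symm, hbx.symm, hcx.symm]
  · convert h₁.isP4SetOn using 1; ext; simp; tauto
  · convert h₂.isP4SetOn using 1; ext; simp; tauto

theorem IsP4Sparse.eq_of_isInducedP4_third (hG : IsP4Sparse G) (h₁ : IsInducedP4 G a b x d)
    (h₂ : IsInducedP4 G a b y d) : x = y :=
  hG.eq_of_isP4SetOn_insert (t := {a, b, d})
    (by obtain ⟨-, hax, -, hbx, -, hxd, -⟩ := h₁; simp [hax.symm, hbx.symm, hxd])
    (by convert h₁.isP4SetOn using 1; ext; simp; tauto)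
    (by convert h₂.isP4SetOn using 1; ext; simp; tauto)

end InducedP4

section ThickSpider

variable {G : SimpleGraph α} {S K Q : Set α} {a b c d : α}

theorem ThickSpider.isInducedP4_cases (hG : ThickSpider G S K Q) (hcover : S ∪ K ∪ Q = univ)
    (h : IsInducedP4 G a b c d) :
    (a ∈ Q ∧ b ∈ Q ∧ c ∈ Q ∧ d ∈ Q) ∨ (a ∈ S ∧ b ∈ K ∧ c ∈ K ∧ d ∈ S) := by
  obtain ⟨hS, hK, -, -, hSK, hSQ, hKQ, hQK, hQS, -⟩ := hG
  have hmem : ∀ x, x ∈ S ∨ x ∈ K ∨ x ∈ Q := fun x => by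
    have := hcover ▸ mem_univ x; simp only [mem_union] at this; tauto
  rw [Set.disjoint_left] at hSK hSQ hKQ
  obtain ⟨hab, hac, had, hbc, hbd, hcd, eab, ebc, ecd, nac, nad, nbd⟩ := h
  have := hmem a; have := hmem b; have := hmem c; have := hmem d
  grind [IsIndepSetOn, Set.Pairwise, SimpleGraph.adj_comm]

variable {s k k' : α}

theorem ThickSpider.leg_eq_of_not_adj (hG : ThickSpider G S K Q) (ha : a ∈ S) (hb : b ∈ S)
    (hk : k ∈ K) (hak : ¬G.Adj a k) (hbk : ¬G.Adj b k) : a = b := by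
  obtain ⟨-, -, -, -, -, -, -, -, -, f, hf, hfadj⟩ := hG
  have hfa : k = f a := not_not.mp ((hfadj a ha k hk).not.mp hak)
  have hfb : k = f b := not_not.mp ((hfadj b hb k hk).not.mp hbk)
  exact hf.injOn ha hb (hfa.symm.trans hfb)

theorem ThickSpider.body_eq_of_not_adj (hG : ThickSpider G S K Q) (hs : s ∈ S) (hk : k ∈ K)
    (hk' : k' ∈ K) (h : ¬G.Adj s k) (h' : ¬G.Adj s k') : k = k' := by
  obtain ⟨-, -, -, -, -, -, -, -, -, f, -, hfadj⟩ := hG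
  exact (not_not.mp ((hfadj s hs k hk).not.mp h)).trans
    (not_not.mp ((hfadj s hs k' hk').not.mp h')).symm

theorem ThickSpider.exists_leg_not_adj (hG : ThickSpider G S K Q) (hk : k ∈ K) :
    ∃ s ∈ S, ¬G.Adj s k := by
  obtain ⟨-, -, -, -, -, -, -, -, -, f, hf, hfadj⟩ := hG
  obtain ⟨s, hs, rfl⟩ := hf.surjOn hk
  exact ⟨s, hs, fun h => (hfadj s hs (f s) hk).mp h rfl⟩

theorem ThickSpider.mem_iff_mem_of_not_adj (hG : ThickSpider G S K Q) (h : IsInducedP4 G a b c d)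
    (ha : a ∈ S) (hb : b ∈ K) (hc : c ∈ K) (hd : d ∈ S) (hs : s ∈ S) (hk : k ∈ K)
    (hsk : ¬G.Adj s k) : s ∈ ({a, b, c, d} : Set α) ↔ k ∈ ({a, b, c, d} : Set α) := by
  have hSK := Set.disjoint_left.mp hG.2.2.2.2.1
  obtain ⟨-, -, -, -, -, -, -, -, -, nac, -, nbd⟩ := h
  simp only [mem_insert_iff, mem_singleton_iff]
  constructor
  · rintro (h | h | h | h)
    · exact Or.inr (Or.inr (Or.inl (hG.body_eq_of_not_adj ha hk hc (h ▸ hsk) nac)))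
    · exact absurd (h ▸ hb) (hSK hs)
    · exact absurd (h ▸ hc) (hSK hs)
    · exact Or.inr (Or.inl (hG.body_eq_of_not_adj hd hk hb (h ▸ hsk) fun e => nbd e.symm))
  · rintro (h | h | h | h)
    · exact absurd (h ▸ hk) (hSK ha)
    · exact Or.inr (Or.inr (Or.inr
        (hG.leg_eq_of_not_adj hs hd hb (h ▸ hsk) fun e => nbd e.symm)))
    · exact Or.inl (hG.leg_eq_of_not_adj hs ha hc (h ▸ hsk) nac)
    · exact absurd (h ▸ hk) (hSK hd)

theorem ThickSpider.eq_of_isInducedP4_legs {a' b' c' d' : α} {U : Set α}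
    (hG : ThickSpider G S K Q) (hU : U.ncard = 5)
    (h₁ : IsInducedP4 G a b c d) (ha : a ∈ S) (hb : b ∈ K) (hc : c ∈ K) (hd : d ∈ S)
    (hU₁ : {a, b, c, d} ⊆ U) (h₂ : IsInducedP4 G a' b' c' d') (ha' : a' ∈ S) (hb' : b' ∈ K)
    (hc' : c' ∈ K) (hd' : d' ∈ S) (hU₂ : {a', b', c', d'} ⊆ U) :
    ({a, b, c, d} : Set α) = {a', b', c', d'} := by
  have hSK := Set.disjoint_left.mp hG.2.2.2.2.1
  have key : ∀ x k, x ∈ S → k ∈ K → ¬G.Adj x k → x ∈ ({a, b, c, d} : Set α) →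
      x ∈ ({a', b', c', d'} : Set α) ∧ k ∈ ({a', b', c', d'} : Set α) := by
    intro x k hx hk hxk hx₁
    have hk₁ := (hG.mem_iff_mem_of_not_adj h₁ ha hb hc hd hx hk hxk).mp hx₁
    have hmem₂ := hG.mem_iff_mem_of_not_adj h₂ ha' hb' hc' hd' hx hk hxk
    by_contra hx₂
    rw [← hmem₂, and_self] at hx₂
    exact hSK hx (h₂.isP4SetOn.eq_of_mem_sdiff hU hU₂ ⟨hU₁ hx₁, hx₂⟩
      ⟨hU₁ hk₁, hmem₂.not.mp hx₂⟩ ▸ hk)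
  have hcard := h₁.isP4SetOn.ncard_eq
  obtain ⟨-, -, -, -, -, -, -, -, -, hac, -, hbd⟩ := h₁
  have hac := key a c ha hc hac (by simp)
  have hdb := key d b hd hb (fun h => hbd h.symm) (by simp)
  exact eq_of_subset_of_ncard_le (by simp [insert_subset_iff, hac, hdb])
    (by rw [hcard, h₂.isP4SetOn.ncard_eq]) h₂.isP4SetOn.finite

end ThickSpider

section Restrict

variable {G : SimpleGraph α} {Q t : Set α} {a b c d : α}

theorem isInducedP4_restrictSet_iff : IsInducedP4 (restrictSet G Q) a b c d ↔
    IsInducedP4 G a b c d ∧ a ∈ Q ∧ b ∈ Q ∧ c ∈ Q ∧ d ∈ Q := by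
  simp only [IsInducedP4, restrictSet_adj]
  tauto

theorem IsP4SetOn.of_restrictSet (h : IsP4SetOn (restrictSet G Q) t) : IsP4SetOn G t := by
  obtain ⟨a, b, c, d, rfl, h⟩ := h
  exact (isInducedP4_restrictSet_iff.mp h).1.isP4SetOn

theorem IsP4Sparse.restrictSet (hG : IsP4Sparse G) (Q : Set α) :
    IsP4Sparse (restrictSet G Q) :=
  fun s hs _ ht₁ _ ht₂ h₁ h₂ => hG s hs _ ht₁ _ ht₂ h₁.of_restrictSet h₂.of_restrictSet

end Restrict

theorem ThickSpider.isP4Sparse {G : SimpleGraph α} {S K Q : Set α} (hG : ThickSpider G S K Q)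
    (hcover : S ∪ K ∪ Q = univ) (hQ : IsP4Sparse (restrictSet G Q)) : IsP4Sparse G := by
  have hSQ := Set.disjoint_left.mp hG.2.2.2.2.2.1
  have hKQ := Set.disjoint_left.mp hG.2.2.2.2.2.2.1
  rintro U hU _ ht₁ _ ht₂ ⟨a, b, c, d, rfl, h₁⟩ ⟨a', b', c', d', rfl, h₂⟩
  have mixed : ∀ {a b c d a' b' c' d'}, IsInducedP4 G a b c d → {a, b, c, d} ⊆ Q →
      {a, b, c, d} ⊆ U → IsInducedP4 G a' b' c' d' → a' ∈ S → b' ∈ K → {a', b', c', d'} ⊆ U →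
      False := fun h₁ hQ₁ hU₁ h₂ ha' hb' hU₂ =>
    h₂.1 (h₁.isP4SetOn.eq_of_mem_sdiff hU hU₁ ⟨hU₂ (by simp), fun h => hSQ ha' (hQ₁ h)⟩
      ⟨hU₂ (by simp), fun h => hKQ hb' (hQ₁ h)⟩)
  rcases hG.isInducedP4_cases hcover h₁ with ⟨ha, hb, hc, hd⟩ | ⟨ha, hb, hc, hd⟩ <;>
  rcases hG.isInducedP4_cases hcover h₂ with ⟨ha', hb', hc', hd'⟩ | ⟨ha', hb', hc', hd'⟩
  · exact hQ U hU _ ht₁ _ ht₂ (isInducedP4_restrictSet_iff.mpr ⟨h₁, ha, hb, hc, hd⟩).isP4SetOn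
      (isInducedP4_restrictSet_iff.mpr ⟨h₂, ha', hb', hc', hd'⟩).isP4SetOn
  · exact (mixed h₁ (by simp [insert_subset_iff, *]) ht₁ h₂ ha' hb' ht₂).elim
  · exact (mixed h₂ (by simp [insert_subset_iff, *]) ht₂ h₁ ha hb ht₁).elim
  · exact hG.eq_of_isInducedP4_legs hU h₁ ha hb hc hd ht₁ h₂ ha' hb' hc' hd' ht₂

theorem addTail_adj {G : SimpleGraph α} {u w x y : α} :
    (addTail G u w).Adj x y ↔ G.Adj x y ∨ ((x = u ∧ y = w ∨ x = w ∧ y = u) ∧ x ≠ y) := by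
  simp [addTail]

theorem restrictSet_addTail {H : SimpleGraph α} {R : Set α} {u w : α} (hw : ∀ x, ¬H.Adj w x)
    (hu : u ∈ R) : restrictSet (addTail H u w) (R ∪ {w}) = addTail (restrictSet H R) u w := by
  ext x y
  simp only [restrictSet_adj, addTail_adj, mem_union, mem_singleton_iff]
  have := hw x
  have := hw y
  grind [SimpleGraph.adj_comm]

def outerFillEdges (B G' : SimpleGraph α) (Q : Set α) : Set (Sym2 α) :=
  (G'.edgeSet \ B.edgeSet) \ (restrictSet G' Q).edgeSet

theorem fillCount_eq_add [Finite α] (B G' : SimpleGraph α) (Q : Set α) :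
    fillCount B G' =
      fillCount (restrictSet B Q) (restrictSet G' Q) + (outerFillEdges B G' Q).ncard := by
  have hinner : (restrictSet G' Q).edgeSet \ (restrictSet B Q).edgeSet =
      (G'.edgeSet \ B.edgeSet) ∩ (restrictSet G' Q).edgeSet := by
    ext e
    induction e using Sym2.ind with
    | _ x y => simp only [mem_sdiff, mem_inter_iff, mem_edgeSet, restrictSet_adj]; tauto
  rw [fillCount, fillCount, hinner, outerFillEdges, ncard_inter_add_ncard_sdiff_eq_ncard]

section Completion

variable {H G'' : SimpleGraph α} {S K R : Set α} {u w : α}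

theorem fromEdgeSet_image_adj {x y : α} : (fromEdgeSet ((fun k => s(w, k)) '' K)).Adj x y ↔
    (x = w ∧ y ∈ K ∨ y = w ∧ x ∈ K) ∧ x ≠ y := by
  simp only [fromEdgeSet_adj, mem_image, Sym2.eq_iff]
  grind

theorem ThickSpider.sup_star (hH : ThickSpider H S K R) (hwS : w ∉ S) (hwK : w ∉ K)
    (hwH : ∀ x, ¬H.Adj w x) (hG'' : ∀ x y, G''.Adj x y → x ∈ R ∪ {w} ∧ y ∈ R ∪ {w}) :
    ThickSpider (H ⊔ G'' ⊔ fromEdgeSet ((fun k => s(w, k)) '' K)) S K (R ∪ {w}) := by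
  obtain ⟨hS, hK, hcard, hK3, hSK, hSR, hKR, hRK, hRS, f, hf, hfadj⟩ := hH
  rw [Set.disjoint_left] at hSK hSR hKR
  refine ⟨?_, ?_, hcard, hK3, ?_, ?_, ?_, ?_, ?_, f, hf, ?_⟩
  · intro x hx y hy
    simp only [sup_adj, fromEdgeSet_image_adj]
    grind [IsIndepSetOn]
  · exact hK.mono le_sup_left |>.mono le_sup_left
  · exact Set.disjoint_left.mpr hSK
  · exact Set.disjoint_left.mpr fun x hx h => by grind
  · exact Set.disjoint_left.mpr fun x hx h => by grind
  · intro x hx k hk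
    simp only [sup_adj, fromEdgeSet_image_adj]
    grind
  · intro x hx s hs
    simp only [sup_adj, fromEdgeSet_image_adj]
    grind
  · intro s hs k hk
    simp only [sup_adj, fromEdgeSet_image_adj]
    grind

theorem restrictSet_sup_star (hwK : w ∉ K) (hKR : Disjoint K R) (hwH : ∀ x, ¬H.Adj w x)
    (hle : restrictSet H R ≤ G'') (hG'' : ∀ x y, G''.Adj x y → x ∈ R ∪ {w} ∧ y ∈ R ∪ {w}) :
    restrictSet (H ⊔ G'' ⊔ fromEdgeSet ((fun k => s(w, k)) '' K)) (R ∪ {w}) = G'' := by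
  rw [Set.disjoint_left] at hKR
  ext x y
  have := @hle x y
  simp only [restrictSet_adj, sup_adj, fromEdgeSet_image_adj] at this ⊢
  grind [SimpleGraph.adj_comm]

theorem outerFillEdges_sup_star (hu : u ∈ R) (hwK : w ∉ K) (hKR : Disjoint K R)
    (hwH : ∀ x, ¬H.Adj w x) (hG'' : ∀ x y, G''.Adj x y → x ∈ R ∪ {w} ∧ y ∈ R ∪ {w}) :
    outerFillEdges (addTail H u w) (H ⊔ G'' ⊔ fromEdgeSet ((fun k => s(w, k)) '' K)) (R ∪ {w}) =
      (fun k => s(w, k)) '' K := by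
  rw [Set.disjoint_left] at hKR
  ext e
  induction e using Sym2.ind with
  | _ x y =>
    have := hG'' x y
    simp only [outerFillEdges, mem_sdiff, mem_edgeSet, restrictSet_adj, sup_adj,
      fromEdgeSet_image_adj, addTail_adj, mem_image, Sym2.eq_iff] at this ⊢
    grind [SimpleGraph.adj_comm]

theorem ThickSpider.add_fillCount_mem_completionFills [Finite α] (hH : ThickSpider H S K R)
    (hcover : S ∪ K ∪ R = {w}ᶜ) (hwH : ∀ x, ¬H.Adj w x) (hu : u ∈ R)
    (hle : addTail (restrictSet H R) u w ≤ G'')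
    (hG'' : ∀ x y, G''.Adj x y → x ∈ R ∪ {w} ∧ y ∈ R ∪ {w}) (hsp : IsP4Sparse G'') :
    K.ncard + fillCount (addTail (restrictSet H R) u w) G'' ∈
      completionFills IsP4Sparse (addTail H u w) := by
  have hw : w ∉ S ∪ K ∪ R := by simp [hcover]
  have hwS : w ∉ S := fun h => hw (Or.inl (Or.inl h))
  have hwK : w ∉ K := fun h => hw (Or.inl (Or.inr h))
  have hKR : Disjoint K R := hH.2.2.2.2.2.2.1
  have hHR : restrictSet H R ≤ G'' := le_sup_left.trans hle
  refine ⟨H ⊔ G'' ⊔ fromEdgeSet ((fun k => s(w, k)) '' K), ?_, ?_, ?_⟩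
  · intro x y h
    rcases addTail_adj.mp h with h | h
    · exact Or.inl (Or.inl h)
    · exact Or.inl (Or.inr (hle (addTail_adj.mpr (Or.inr h))))
  · refine (hH.sup_star hwS hwK hwH hG'').isP4Sparse ?_ ?_
    · rw [← union_assoc, hcover, compl_union_self]
    · rwa [restrictSet_sup_star hwK hKR hwH hHR hG'']
  · rw [fillCount_eq_add _ _ (R ∪ {w}), restrictSet_addTail hwH hu,
      restrictSet_sup_star hwK hKR hwH hHR hG'', outerFillEdges_sup_star hu hwK hKR hwH hG'',
      ncard_image_of_injective _ fun _ _ => Sym2.congr_right.mp, add_comm]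

end Completion

theorem Set.ncard_le_two_of {X : Set α} (p : α → Prop) (hp : ∀ x ∈ X, ∀ y ∈ X, p x → p y → x = y)
    (hnp : ∀ x ∈ X, ∀ y ∈ X, ¬p x → ¬p y → x = y) : X.ncard ≤ 2 := by
  by_contra! h
  obtain ⟨a, b, c, ha, hb, hc, hab, hac, hbc⟩ :=
    (two_lt_ncard_iff (finite_of_ncard_pos (by omega))).mp h
  by_cases pa : p a <;> by_cases pb : p b <;> by_cases pc : p c <;> grind

section LowerBound

variable {H G' : SimpleGraph α} {S K R : Set α} {u w : α}

theorem ThickSpider.isInducedP4_tail (hH : ThickSpider H S K R) (hw : w ∉ S ∪ K ∪ R)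
    (hu : u ∈ R) (hG' : addTail H u w ≤ G') {k s : α} (hk : k ∈ K) (hs : s ∈ S)
    (hsk : H.Adj s k) (hwk : ¬G'.Adj w k) (hus : ¬G'.Adj u s) (hws : ¬G'.Adj w s) :
    IsInducedP4 G' w u k s := by
  obtain ⟨-, -, -, -, hSK, hSR, hKR, hRK, -⟩ := hH
  rw [Set.disjoint_left] at hSK hSR hKR
  have hHG' : H ≤ G' := le_sup_left.trans hG'
  have huw : G'.Adj u w := hG' (addTail_adj.mpr (Or.inr ⟨Or.inl ⟨rfl, rfl⟩, by grind⟩))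
  refine ⟨by grind, by grind, by grind, by grind, by grind, by grind, huw.symm,
    hHG' (hRK u hu k hk), hHG' hsk.symm, hwk, hws, hus⟩

theorem ThickSpider.eq_of_isInducedP4_tail_body (hH : ThickSpider H S K R) (hw : w ∉ S ∪ K ∪ R)
    (hu : u ∈ R) (hG' : addTail H u w ≤ G') (hsp : IsP4Sparse G') {s k₁ k₂ : α}
    (hs : s ∈ S \ (G'.neighborSet u ∪ G'.neighborSet w)) (hk₁ : k₁ ∈ K \ G'.neighborSet w)
    (hk₂ : k₂ ∈ K \ G'.neighborSet w) (h₁ : H.Adj s k₁) (h₂ : H.Adj s k₂) : k₁ = k₂ := by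
  simp only [mem_sdiff, mem_union, mem_neighborSet, not_or] at hs hk₁ hk₂
  exact hsp.eq_of_isInducedP4_third
    (hH.isInducedP4_tail hw hu hG' hk₁.1 hs.1 h₁ hk₁.2 hs.2.1 hs.2.2)
    (hH.isInducedP4_tail hw hu hG' hk₂.1 hs.1 h₂ hk₂.2 hs.2.1 hs.2.2)

theorem ThickSpider.eq_of_isInducedP4_tail_leg (hH : ThickSpider H S K R) (hw : w ∉ S ∪ K ∪ R)
    (hu : u ∈ R) (hG' : addTail H u w ≤ G') (hsp : IsP4Sparse G') {k s₁ s₂ : α}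
    (hk : k ∈ K \ G'.neighborSet w) (hs₁ : s₁ ∈ S \ (G'.neighborSet u ∪ G'.neighborSet w))
    (hs₂ : s₂ ∈ S \ (G'.neighborSet u ∪ G'.neighborSet w)) (h₁ : H.Adj s₁ k)
    (h₂ : H.Adj s₂ k) : s₁ = s₂ := by
  simp only [mem_sdiff, mem_union, mem_neighborSet, not_or] at hk hs₁ hs₂
  exact hsp.eq_of_isInducedP4_last
    (hH.isInducedP4_tail hw hu hG' hk.1 hs₁.1 h₁ hk.2 hs₁.2.1 hs₁.2.2)
    (hH.isInducedP4_tail hw hu hG' hk.1 hs₂.1 h₂ hk.2 hs₂.2.1 hs₂.2.2)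

theorem ThickSpider.ncard_untouched_legs_le_two (hH : ThickSpider H S K R)
    (hw : w ∉ S ∪ K ∪ R) (hu : u ∈ R) (hG' : addTail H u w ≤ G') (hsp : IsP4Sparse G') {k : α}
    (hk : k ∈ K \ G'.neighborSet w) : (S \ (G'.neighborSet u ∪ G'.neighborSet w)).ncard ≤ 2 :=
  ncard_le_two_of (H.Adj · k)
    (fun _ hx _ hy => hH.eq_of_isInducedP4_tail_leg hw hu hG' hsp hk hx hy)
    (fun _ hx _ hy => hH.leg_eq_of_not_adj hx.1 hy.1 hk.1)

theorem ThickSpider.ncard_untouched_body_le_two (hH : ThickSpider H S K R)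
    (hw : w ∉ S ∪ K ∪ R) (hu : u ∈ R) (hG' : addTail H u w ≤ G') (hsp : IsP4Sparse G') {s : α}
    (hs : s ∈ S \ (G'.neighborSet u ∪ G'.neighborSet w)) : (K \ G'.neighborSet w).ncard ≤ 2 :=
  ncard_le_two_of (H.Adj s)
    (fun _ hx _ hy => hH.eq_of_isInducedP4_tail_body hw hu hG' hsp hs hx hy)
    (fun _ hx _ hy => hH.body_eq_of_not_adj hs.1 hx.1 hy.1)

theorem ThickSpider.ncard_touched_le_outerFillEdges [Finite α] (hH : ThickSpider H S K R)
    (hw : w ∉ S ∪ K ∪ R) (hwH : ∀ x, ¬H.Adj w x) (hu : u ∈ R) :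
    (K ∩ G'.neighborSet w).ncard + (S ∩ (G'.neighborSet u ∪ G'.neighborSet w)).ncard +
        ((restrictSet G' (S ∪ K)).edgeSet \ H.edgeSet).ncard ≤
      (outerFillEdges (addTail H u w) G' (R ∪ {w})).ncard := by
  classical
  obtain ⟨-, -, -, -, hSK, hSR, hKR, -, hRS, -⟩ := hH
  rw [Set.disjoint_left] at hSK hSR hKR
  set T := (K ∩ G'.neighborSet w) ∪ (S ∩ (G'.neighborSet u ∪ G'.neighborSet w))
  -- the edge charged to a touched vertex `x`
  set e : α → Sym2 α := fun x => s(if x ∈ S ∧ G'.Adj u x then u else w, x)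
  have hT : T.ncard = (K ∩ G'.neighborSet w).ncard +
      (S ∩ (G'.neighborSet u ∪ G'.neighborSet w)).ncard :=
    ncard_union_eq (Set.disjoint_left.mpr fun x hK hS => hSK hS.1 hK.1)
  have hinj : InjOn e T := by
    intro x hx y hy hxy
    simp only [e, T, Sym2.eq_iff, mem_union, mem_inter_iff] at hxy hx hy
    grind
  have hdisj : Disjoint (e '' T) ((restrictSet G' (S ∪ K)).edgeSet \ H.edgeSet) := by
    rw [Set.disjoint_left]
    rintro _ ⟨x, hx, rfl⟩ ⟨hxe, -⟩
    simp only [e, mem_edgeSet, restrictSet_adj, mem_union] at hxe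
    grind
  have hsub : e '' T ∪ ((restrictSet G' (S ∪ K)).edgeSet \ H.edgeSet) ⊆
      outerFillEdges (addTail H u w) G' (R ∪ {w}) := by
    rintro e (⟨x, hx, rfl⟩ | ⟨hxe, hHe⟩)
    · simp only [e, T, outerFillEdges, mem_sdiff, mem_edgeSet, restrictSet_adj, addTail_adj,
        mem_union, mem_inter_iff, mem_neighborSet, mem_singleton_iff] at hx ⊢
      grind [SimpleGraph.adj_comm]
    · induction e using Sym2.ind with
      | _ x y =>
        simp only [outerFillEdges, mem_sdiff, mem_edgeSet, restrictSet_adj, addTail_adj,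
          mem_union, mem_singleton_iff] at hxe hHe ⊢
        grind
  calc _ = (e '' T ∪ ((restrictSet G' (S ∪ K)).edgeSet \ H.edgeSet)).ncard := by
        rw [ncard_union_eq hdisj, hinj.ncard_image, hT]
    _ ≤ _ := ncard_le_ncard hsub

theorem ThickSpider.false_of_one_touched (hH : ThickSpider H S K R) (hw : w ∉ S ∪ K ∪ R)
    (hu : u ∈ R) (hG' : addTail H u w ≤ G') (hsp : IsP4Sparse G')
    (hhead : restrictSet G' (S ∪ K) ≤ H) {kst sst ka kb sa sb : α}
    (hkst : kst ∈ K ∩ G'.neighborSet w) (hsst : sst ∈ S)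
    (hlegs : ∀ s ∈ S, s ≠ sst → s ∈ S \ (G'.neighborSet u ∪ G'.neighborSet w))
    (hka : ka ∈ K \ G'.neighborSet w) (hkb : kb ∈ K \ G'.neighborSet w) (hkab : ka ≠ kb)
    (hsa : sa ∈ S \ (G'.neighborSet u ∪ G'.neighborSet w))
    (hsb : sb ∈ S \ (G'.neighborSet u ∪ G'.neighborSet w)) (hsab : sa ≠ sb) : False := by
  have hsst_kst : ¬H.Adj sst kst := by
    intro h
    obtain ⟨s₀, hs₀, hs₀k⟩ := hH.exists_leg_not_adj hkst.1
    have hs₀X := hlegs s₀ hs₀ (by rintro rfl; exact hs₀k h)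
    have hadj : ∀ k ∈ K \ G'.neighborSet w, H.Adj s₀ k := fun k hk => by
      by_contra hn
      exact hk.2 (hH.body_eq_of_not_adj hs₀ hkst.1 hk.1 hs₀k hn ▸ hkst.2)
    exact hkab (hH.eq_of_isInducedP4_tail_body hw hu hG' hsp hs₀X hka hkb (hadj ka hka)
      (hadj kb hkb))
  have hSK := Set.disjoint_left.mp hH.2.2.2.2.1
  have hKR := Set.disjoint_left.mp hH.2.2.2.2.2.2.1
  have hSR := Set.disjoint_left.mp hH.2.2.2.2.2.1
  have hHG' : H ≤ G' := le_sup_left.trans hG'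
  have hhead' : ∀ x y, x ∈ S ∪ K → y ∈ S ∪ K → G'.Adj x y → H.Adj x y :=
    fun x y hx hy h => hhead ⟨h, hx, hy⟩
  simp only [mem_sdiff, mem_inter_iff, mem_union, mem_neighborSet, not_or] at hkst hka hkb hsa hsb
  by_cases hwsst : G'.Adj w sst
  · have hP4 : ∀ x, x ∈ S → ¬G'.Adj w x → IsInducedP4 G' sst w kst x := by
      intro x hx hwx
      have hxk : H.Adj x kst := by
        by_contra hn
        exact hwx (hH.leg_eq_of_not_adj hx hsst hkst.1 hn hsst_kst ▸ hwsst)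
      refine IsInducedP4.reverse ⟨by grind, by grind, by grind, by grind, by grind, by grind,
        hHG' hxk, hkst.2.symm, hwsst, fun h => hwx h.symm, fun h => ?_, fun h => ?_⟩
      · exact hH.1 x hx sst hsst (hhead' x sst (Or.inl hx) (Or.inl hsst) h)
      · exact hsst_kst (hhead' kst sst (Or.inr hkst.1) (Or.inl hsst) h).symm
    exact hsab (hsp.eq_of_isInducedP4_last (hP4 sa hsa.1 hsa.2.2) (hP4 sb hsb.1 hsb.2.2))
  · have hP4 : ∀ k, k ∈ K → ¬G'.Adj w k → IsInducedP4 G' w kst k sst := by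
      intro k hk hwk
      have hsk : H.Adj sst k := by
        by_contra hn
        exact hwk (hH.body_eq_of_not_adj hsst hkst.1 hk hsst_kst hn ▸ hkst.2)
      have hkkst : k ≠ kst := fun h => hwk (h ▸ hkst.2)
      refine IsInducedP4.reverse ⟨by grind, by grind, by grind, hkkst, by grind, by grind,
        hHG' hsk, hHG' (hH.2.1 hk hkst.1 hkkst), hkst.2.symm, fun h => ?_,
        fun h => hwsst h.symm, fun h => hwk h.symm⟩
      exact hsst_kst (hhead' sst kst (Or.inl hsst) (Or.inr hkst.1) h)
    exact hkab (hsp.eq_of_isInducedP4_third (hP4 ka hka.1 hka.2) (hP4 kb hkb.1 hkb.2))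

theorem ThickSpider.ncard_le_outerFillEdges [Finite α] (hH : ThickSpider H S K R)
    (hw : w ∉ S ∪ K ∪ R) (hwH : ∀ x, ¬H.Adj w x) (hu : u ∈ R) (hG' : addTail H u w ≤ G')
    (hsp : IsP4Sparse G') : K.ncard ≤ (outerFillEdges (addTail H u w) G' (R ∪ {w})).ncard := by
  by_contra! hlt
  have hcount := hH.ncard_touched_le_outerFillEdges (G' := G') hw hwH hu
  have hSX := ncard_inter_add_ncard_sdiff_eq_ncard S (G'.neighborSet u ∪ G'.neighborSet w)
  have hKY := ncard_inter_add_ncard_sdiff_eq_ncard K (G'.neighborSet w)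
  have hSK : S.ncard = K.ncard := hH.2.2.1
  have hK3 : 3 ≤ K.ncard := hH.2.2.2.1
  obtain ⟨k, hk⟩ := nonempty_of_ncard_ne_zero (s := K \ G'.neighborSet w) (by omega)
  obtain ⟨s, hs⟩ :=
    nonempty_of_ncard_ne_zero (s := S \ (G'.neighborSet u ∪ G'.neighborSet w)) (by omega)
  have hX2 := hH.ncard_untouched_legs_le_two hw hu hG' hsp hk
  have hY2 := hH.ncard_untouched_body_le_two hw hu hG' hsp hs
  obtain ⟨kst, hkst⟩ := ncard_eq_one.mp (show (K ∩ G'.neighborSet w).ncard = 1 by omega)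
  obtain ⟨sst, hsst⟩ := ncard_eq_one.mp
    (show (S ∩ (G'.neighborSet u ∪ G'.neighborSet w)).ncard = 1 by omega)
  obtain ⟨ka, kb, hkab, hY⟩ := ncard_eq_two.mp (show (K \ G'.neighborSet w).ncard = 2 by omega)
  obtain ⟨sa, sb, hsab, hX⟩ :=
    ncard_eq_two.mp (show (S \ (G'.neighborSet u ∪ G'.neighborSet w)).ncard = 2 by omega)
  have hE : (restrictSet G' (S ∪ K)).edgeSet \ H.edgeSet = ∅ :=
    (ncard_eq_zero (toFinite _)).mp (by omega)
  have hsstS : sst ∈ S := (hsst ▸ mem_singleton sst : sst ∈ S ∩ _).1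
  refine hH.false_of_one_touched hw hu hG' hsp ?_ (hkst ▸ mem_singleton kst) hsstS ?_
    (hY ▸ by simp) (hY ▸ by simp) hkab (hX ▸ by simp) (hX ▸ by simp) hsab
  · exact edgeSet_subset_edgeSet.mp (sdiff_eq_empty.mp hE)
  · intro s hs hne
    refine ⟨hs, fun h => hne ?_⟩
    have : s ∈ S ∩ (G'.neighborSet u ∪ G'.neighborSet w) := ⟨hs, h⟩
    rwa [hsst] at this

end LowerBound

theorem thickSpider_tail_R_general [Fintype α]
    (H : SimpleGraph α) (u w : α) (S K R : Set α)
    (hspider : ThickSpider H S K R)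
    (hcover : S ∪ K ∪ R = {w}ᶜ)
    (hw : ∀ x, ¬ H.Adj w x)
    (hu : u ∈ R)
    (f' : ℕ)
    (hf' : IsLeast {n | ∃ G'' : SimpleGraph α,
        addTail (restrictSet H R) u w ≤ G'' ∧
        (∀ x y, G''.Adj x y → x ∈ R ∪ {w} ∧ y ∈ R ∪ {w}) ∧
        IsP4Sparse G'' ∧ fillCount (addTail (restrictSet H R) u w) G'' = n} f') :
    IsLeast (completionFills IsP4Sparse (addTail H u w)) (K.ncard + f') := by
  obtain ⟨⟨G'', hle, hsupp, hsp, rfl⟩, hmin⟩ := hf'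
  refine ⟨hspider.add_fillCount_mem_completionFills hcover hw hu hle hsupp hsp, ?_⟩
  rintro _ ⟨G', hG', hsp', rfl⟩
  have hinner := hmin ⟨restrictSet G' (R ∪ {w}),
    restrictSet_addTail hw hu ▸ fun _ _ h => ⟨hG' h.1, h.2⟩, fun _ _ h => h.2,
    hsp'.restrictSet _, rfl⟩
  have houter := hspider.ncard_le_outerFillEdges (by simp [hcover]) hw hu hG' hsp'
  rw [fillCount_eq_add (addTail H u w) G' (R ∪ {w}), restrictSet_addTail hw hu]
  omega

/-- tail at `u ∈ R` of a thick spider with `H[R]` P₄-sparse, where `f'`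
is the minimum number of fill edges of a P₄-sparse completion of `H[R]+uw`. -/
theorem thickSpider_tail_R [Fintype α]
    (H : SimpleGraph α) (u w : α) (S K R : Set α)
    (hspider : ThickSpider H S K R)
    (hcover : S ∪ K ∪ R = {w}ᶜ)
    (hw : ∀ x, ¬ H.Adj w x)
    (hRsparse : IsP4Sparse (restrictSet H R)) (hu : u ∈ R)
    (f' : ℕ)
    (hf' : IsLeast {n | ∃ G'' : SimpleGraph α,
        addTail (restrictSet H R) u w ≤ G'' ∧
        (∀ x y, G''.Adj x y → x ∈ R ∪ {w} ∧ y ∈ R ∪ {w}) ∧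
        IsP4Sparse G'' ∧ fillCount (addTail (restrictSet H R) u w) G'' = n} f') :
    IsLeast (completionFills IsP4Sparse (addTail H u w)) (K.ncard + f') :=
  thickSpider_tail_R_general H u w S K R hspider hcover hw hu f' hf'
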